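/- In the A_{2n}^{(2)} perfect crystal B of level l, the extremal elements b_a, defined by b_0 = (0,...,0), b_a = f_{i_a}^{max} b_{a-1}, with i_a = a-1 for 1 ≤ a ≤ n+1 and i_a = 2n+1-a for n+2 ≤ a ≤ 2n, are: b_a = (0,...,0,l,0,...,0) with l in position x_a for 1 ≤ a ≤ n, and b_{n+a} = (0,...,0,l,0,...,0) with l in position \bar{x}_{n-a+1} for 1 ≤ a ≤ n. Moreover ε_{i_{a+1}}(b_a) = 0 for 1 ≤ a ≤ 2n-1, and b_0 = f_0^l b_{2n}. -/

import Mathlib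

/- The perfect crystal B of level l for A_{2n}^{(2)}:
   elements (x_1,…,x_n,x̄_n,…,x̄_1) with x_i, x̄_i ≥ 0 and Σ (x_i + x̄_i) ≤ l.
   We encode an element as a pair of ℕ-indexed integer functions
   supported on 1..n. -/
structure AElt where
  x : ℕ → ℤ
  xb : ℕ → ℤ

namespace AElt

def sumA (n : ℕ) (b : AElt) : ℤ := ∑ i ∈ Finset.Icc 1 n, (b.x i + b.xb i)

/-- membership in the level `l` perfect crystal `B` for `A_{2n}^{(2)}` -/
def mem (n l : ℕ) (b : AElt) : Prop :=
  (∀ i, 0 ≤ b.x i) ∧ (∀ i, 0 ≤ b.xb i) ∧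
  (∀ i, i = 0 ∨ n < i → b.x i = 0 ∧ b.xb i = 0) ∧
  sumA n b ≤ l

/-- the Kashiwara operator `f_0` -/
def f0 (b : AElt) : AElt :=
  if b.xb 1 ≤ b.x 1 then ⟨Function.update b.x 1 (b.x 1 + 1), b.xb⟩
  else ⟨b.x, Function.update b.xb 1 (b.xb 1 - 1)⟩

/-- the Kashiwara operator `f_i`, `1 ≤ i ≤ n-1` -/
def fmid (i : ℕ) (b : AElt) : AElt :=
  if b.xb (i+1) ≤ b.x (i+1) then
    ⟨Function.update (Function.update b.x i (b.x i - 1)) (i+1) (b.x (i+1) + 1), b.xb⟩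
  else
    ⟨b.x, Function.update (Function.update b.xb (i+1) (b.xb (i+1) - 1)) i (b.xb i + 1)⟩

/-- the Kashiwara operator `f_n` -/
def flast (n : ℕ) (b : AElt) : AElt :=
  ⟨Function.update b.x n (b.x n - 1), Function.update b.xb n (b.xb n + 1)⟩

/-- the Kashiwara operator `f_i`, `0 ≤ i ≤ n` -/
def f (n i : ℕ) (b : AElt) : AElt :=
  if i = 0 then f0 b else if i = n then flast n b else fmid i b

/-- `φ_i(b)`; `f_i b` is defined exactly when `φ_i(b) > 0` -/
def phi (n l i : ℕ) (b : AElt) : ℤ :=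
  if i = 0 then (l : ℤ) - sumA n b + 2 * max (b.xb 1 - b.x 1) 0
  else if i = n then b.x n
  else b.x i + max (b.xb (i+1) - b.x (i+1)) 0

/-- `ε_i(b)` for the `A_{2n}^{(2)}` perfect crystal -/
def eps (n l i : ℕ) (b : AElt) : ℤ :=
  if i = 0 then (l : ℤ) - sumA n b + 2 * max (b.x 1 - b.xb 1) 0
  else if i = n then b.xb n
  else b.xb i + max (b.x (i+1) - b.xb (i+1)) 0

end AElt

namespace AElt

/-- the index sequence `i_a = a-1` for `1 ≤ a ≤ n+1`, `i_a = 2n+1-a` for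
`n+2 ≤ a ≤ 2n` -/
def idx (n a : ℕ) : ℕ := if a ≤ n + 1 then a - 1 else 2 * n + 1 - a

/-- the ground-state element `(0,…,0)` -/
def bzero : AElt := ⟨fun _ => 0, fun _ => 0⟩

/-- element with `l` in position `x_p`, zeros elsewhere -/
def unitX (l p : ℕ) : AElt := ⟨fun i => if i = p then (l : ℤ) else 0, fun _ => 0⟩

/-- element with `l` in position `x̄_p`, zeros elsewhere -/
def unitXb (l p : ℕ) : AElt := ⟨fun _ => 0, fun i => if i = p then (l : ℤ) else 0⟩

/-- the extremal elements `b_0 = (0,…,0)`, `b_a = f_{i_a}^{max} b_{a-1}` -/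
def bseq (n l : ℕ) : ℕ → AElt
  | 0 => bzero
  | a + 1 => (f n (idx n (a+1)))^[(phi n l (idx n (a+1)) (bseq n l a)).toNat] (bseq n l a)

end AElt

/-!
Each step `b_{a-1} ↦ b_a` has `φ_{i_a}(b_{a-1}) = l`, and every application of `f_{i_a}` moves
one unit along the chain `x_1 → x_2 → ⋯ → x_n → x̄_n → x̄_{n-1} → ⋯ → x̄_1`: `f_0` feeds `x_1`,
`f_i` moves a unit from `x_i` to `x_{i+1}` or from `x̄_{i+1}` to `x̄_i`, and `f_n` moves one from
`x_n` to `x̄_n`. Hence `f_{i_a}^l` carries the whole mass `l` one site further, and finally `f_0^l`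
drains `x̄_1`.
-/

theorem Function.iterate_apply_eq_of_step {α : Type*} {g : α → α} {s : ℕ → α} {m : ℕ}
    (h : ∀ k < m, g (s k) = s (k + 1)) : g^[m] (s 0) = s m := by
  induction m with
  | zero => rfl
  | succ m ih =>
    rw [Function.iterate_succ_apply', ih fun k hk => h k (by omega), h m (by omega)]

namespace AElt

attribute [ext] AElt

variable {n l : ℕ}

theorem idx_succ_of_le {a : ℕ} (h : a ≤ n) : idx n (a + 1) = a := by
  simp [idx, h]

theorem idx_add_succ (a : ℕ) : idx n (n + a + 1) = n - a := by
  unfold idx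
  split_ifs <;> omega

theorem bseq_zero : bseq n l 0 = bzero := rfl

theorem bseq_succ_eq {a i : ℕ} {b : AElt} (hi : idx n (a + 1) = i) (hb : bseq n l a = b)
    (hphi : phi n l i b = l) : bseq n l (a + 1) = (f n i)^[l] b := by
  rw [bseq, hi, hb, hphi, Int.toNat_natCast]

theorem phi_zero_bzero : phi n l 0 bzero = l := by
  simp [phi, sumA, bzero]

theorem phi_unitX {i : ℕ} (hi : 1 ≤ i) : phi n l i (unitX l i) = l := by
  unfold phi
  split_ifs <;> simp [unitX] <;> omega

theorem phi_unitXb {i : ℕ} (hi : 1 ≤ i) (hin : i < n) : phi n l i (unitXb l (i + 1)) = l := by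
  simp [phi, unitXb, show i ≠ 0 by omega, show i ≠ n by omega]

-- The elements `f_{i_a}^k b_{a-1}`, `0 ≤ k ≤ l`, split the mass between two adjacent sites.
def pairX (i : ℕ) (u v : ℤ) : AElt :=
  ⟨fun j => if j = i then u else if j = i + 1 then v else 0, fun _ => 0⟩

def pairXb (i : ℕ) (u v : ℤ) : AElt :=
  ⟨fun _ => 0, fun j => if j = i then u else if j = i + 1 then v else 0⟩

def pairN (n : ℕ) (u v : ℤ) : AElt :=
  ⟨fun j => if j = n then u else 0, fun j => if j = n then v else 0⟩

theorem f_zero_unitX_one (k : ℕ) : f n 0 (unitX k 1) = unitX (k + 1) 1 := by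
  have hcond : (unitX k 1).xb 1 ≤ (unitX k 1).x 1 := by simp [unitX]
  rw [f, if_pos rfl, f0, if_pos hcond]
  ext j <;> simp [unitX, Function.update_apply]
  all_goals split_ifs <;> omega

theorem f_pairX {i : ℕ} (hi : 1 ≤ i) (hin : i < n) (u : ℤ) {v : ℤ} (hv : 0 ≤ v) :
    f n i (pairX i u v) = pairX i (u - 1) (v + 1) := by
  have hcond : (pairX i u v).xb (i + 1) ≤ (pairX i u v).x (i + 1) := by simpa [pairX] using hv
  rw [f, if_neg (by omega), if_neg (by omega), fmid, if_pos hcond]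
  ext j <;> simp [pairX, Function.update_apply]
  all_goals split_ifs <;> omega

theorem f_self_pairN (hn : n ≠ 0) (u v : ℤ) : f n n (pairN n u v) = pairN n (u - 1) (v + 1) := by
  rw [f, if_neg hn, if_pos rfl, flast]
  ext j <;> simp [pairN, Function.update_apply]
  all_goals split_ifs <;> omega

theorem f_pairXb {i : ℕ} (hi : 1 ≤ i) (hin : i < n) (u : ℤ) {v : ℤ} (hv : 0 < v) :
    f n i (pairXb i u v) = pairXb i (u + 1) (v - 1) := by
  have hcond : ¬(pairXb i u v).xb (i + 1) ≤ (pairXb i u v).x (i + 1) := by simpa [pairXb] using hv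
  rw [f, if_neg (by omega), if_neg (by omega), fmid, if_neg hcond]
  ext j <;> simp [pairXb, Function.update_apply]
  all_goals split_ifs <;> omega

theorem f_zero_unitXb_one (k : ℕ) : f n 0 (unitXb (k + 1) 1) = unitXb k 1 := by
  have hcond : ¬(unitXb (k + 1) 1).xb 1 ≤ (unitXb (k + 1) 1).x 1 := by simp [unitXb]
  rw [f, if_pos rfl, f0, if_neg hcond]
  ext j <;> simp [unitXb, Function.update_apply]
  all_goals split_ifs <;> omega

theorem iterate_f_zero_bzero : (f n 0)^[l] bzero = unitX l 1 := by
  induction l with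
  | zero => ext j <;> simp [bzero, unitX]
  | succ l ih => rw [Function.iterate_succ_apply', ih, f_zero_unitX_one]

theorem iterate_f_unitX {i : ℕ} (hi : 1 ≤ i) (hin : i < n) :
    (f n i)^[l] (unitX l i) = unitX l (i + 1) := by
  have h := Function.iterate_apply_eq_of_step (g := f n i) (m := l)
    (s := fun k => pairX i (l - k) k) fun k _ => by
      rw [f_pairX hi hin _ (by positivity)]; push_cast; ring_nf
  convert h using 2 <;> ext j <;> simp [pairX, unitX]
  omega

theorem iterate_f_self_unitX (hn : n ≠ 0) : (f n n)^[l] (unitX l n) = unitXb l n := by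
  have h := Function.iterate_apply_eq_of_step (g := f n n) (m := l)
    (s := fun k => pairN n (l - k) k) fun k _ => by
      rw [f_self_pairN hn]; push_cast; ring_nf
  convert h using 2 <;> ext j <;> simp [pairN, unitX, unitXb]

theorem iterate_f_unitXb {i : ℕ} (hi : 1 ≤ i) (hin : i < n) :
    (f n i)^[l] (unitXb l (i + 1)) = unitXb l i := by
  have h := Function.iterate_apply_eq_of_step (g := f n i) (m := l)
    (s := fun k => pairXb i k (l - k)) fun k hk => by
      rw [f_pairXb hi hin _ (by omega)]; push_cast; ring_nf
  convert h using 2 <;> ext j <;> simp [pairXb, unitXb]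
  omega

theorem iterate_f_zero_unitXb_one : (f n 0)^[l] (unitXb l 1) = bzero := by
  induction l with
  | zero => ext j <;> simp [bzero, unitXb]
  | succ l ih => rw [Function.iterate_succ_apply, f_zero_unitXb_one, ih]

theorem bseq_eq_unitX {a : ℕ} (ha : 1 ≤ a) (han : a ≤ n) : bseq n l a = unitX l a := by
  induction a, ha using Nat.le_induction with
  | base =>
    rw [bseq_succ_eq (idx_succ_of_le (Nat.zero_le n)) bseq_zero phi_zero_bzero, iterate_f_zero_bzero]
  | succ a ha ih =>
    rw [bseq_succ_eq (idx_succ_of_le (by omega)) (ih (by omega)) (phi_unitX ha),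
      iterate_f_unitX ha (by omega)]

theorem bseq_add_eq_unitXb {a : ℕ} (ha : 1 ≤ a) (han : a ≤ n) :
    bseq n l (n + a) = unitXb l (n - a + 1) := by
  induction a, ha using Nat.le_induction with
  | base =>
    rw [bseq_succ_eq (idx_succ_of_le le_rfl) (bseq_eq_unitX (by omega) le_rfl)
      (phi_unitX (by omega)), iterate_f_self_unitX (by omega), Nat.sub_add_cancel (by omega)]
  | succ a ha ih =>
    have hsite : n - a = n - (a + 1) + 1 := by omega
    rw [← add_assoc, bseq_succ_eq (idx_add_succ a) (ih (by omega)) (phi_unitXb (by omega) (by omega)),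
      iterate_f_unitXb (by omega) (by omega), hsite]

theorem eps_idx_succ_bseq {a : ℕ} (ha : 1 ≤ a) (han : a ≤ 2 * n - 1) :
    eps n l (idx n (a + 1)) (bseq n l a) = 0 := by
  rcases lt_trichotomy a n with h | rfl | h
  · rw [idx_succ_of_le h.le, bseq_eq_unitX ha h.le]
    simp [eps, unitX, h.ne, show a ≠ 0 by omega]
  · rw [idx_succ_of_le le_rfl, bseq_eq_unitX ha le_rfl]
    simp [eps, unitX, show a ≠ 0 by omega]
  · obtain ⟨j, rfl⟩ : ∃ j, a = n + j := ⟨a - n, by omega⟩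
    rw [idx_add_succ, bseq_add_eq_unitXb (by omega) (by omega)]
    simp [eps, unitXb, show n - j ≠ 0 by omega, show n - j ≠ n by omega]

end AElt

theorem A2n2_extremal_elements_general (n l : ℕ) (hn : 2 ≤ n) :
    (∀ a, 1 ≤ a → a ≤ n → AElt.bseq n l a = AElt.unitX l a) ∧
    (∀ a, 1 ≤ a → a ≤ n → AElt.bseq n l (n + a) = AElt.unitXb l (n - a + 1)) ∧
    (∀ a, 1 ≤ a → a ≤ 2*n - 1 →
      AElt.eps n l (AElt.idx n (a+1)) (AElt.bseq n l a) = 0) ∧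
    (AElt.f n 0)^[l] (AElt.bseq n l (2*n)) = AElt.bseq n l 0 := by
  refine ⟨fun a => AElt.bseq_eq_unitX, fun a => AElt.bseq_add_eq_unitXb,
    fun a => AElt.eps_idx_succ_bseq, ?_⟩
  rw [two_mul, AElt.bseq_add_eq_unitXb (by omega) le_rfl, Nat.sub_self,
    AElt.iterate_f_zero_unitXb_one, AElt.bseq_zero]

/-- in the `A_{2n}^{(2)}` perfect crystal of level `l`, the extremal
elements satisfy `b_a = (0,…,0,l,0,…,0)` with `l` in position `x_a` for
`1 ≤ a ≤ n`, and `b_{n+a}` has `l` in position `x̄_{n-a+1}` for `1 ≤ a ≤ n`;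
moreover `ε_{i_{a+1}}(b_a) = 0` for `1 ≤ a ≤ 2n-1`, and `b_0 = f_0^l b_{2n}`. -/
theorem A2n2_extremal_elements (n l : ℕ) (hn : 2 ≤ n) (hl : 1 ≤ l) :
    (∀ a, 1 ≤ a → a ≤ n → AElt.bseq n l a = AElt.unitX l a) ∧
    (∀ a, 1 ≤ a → a ≤ n → AElt.bseq n l (n + a) = AElt.unitXb l (n - a + 1)) ∧
    (∀ a, 1 ≤ a → a ≤ 2*n - 1 →
      AElt.eps n l (AElt.idx n (a+1)) (AElt.bseq n l a) = 0) ∧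
    (AElt.f n 0)^[l] (AElt.bseq n l (2*n)) = AElt.bseq n l 0 :=
  A2n2_extremal_elements_general n l hn
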